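/- Let α_lo ∈ (0, 1), let q_lo : ℝ^p → ℝ be a measurable function, and let (X_1, Y_1), …, (X_{m+1}, Y_{m+1}) be exchangeable random variables in ℝ^p × ℝ. Define the lower-tail conformity scores E_i^lo = q_lo(X_i) − Y_i for i = 1, …, m+1, and let Q_{1−α_lo} denote the ⌈(1−α_lo)(m+1)⌉-th smallest value among E_1^lo, …, E_m^lo (equal to +∞ if ⌈(1−α_lo)(m+1)⌉ > m). Then P( Y_{m+1} ≥ q_lo(X_{m+1}) − Q_{1−α_lo} ) ≥ 1 − α_lo. -/
import Mathlib


open MeasureTheory Finset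
open scoped ENNReal

/-- A finite family of random variables is exchangeable if its joint distribution is invariant
under every permutation of the indices. -/
def Exchangeable {Ω α : Type*} [MeasurableSpace Ω] [MeasurableSpace α]
    (μ : Measure Ω) {n : ℕ} (Z : Fin n → Ω → α) : Prop :=
  ∀ σ : Equiv.Perm (Fin n),
    Measure.map (fun ω (i : Fin n) => Z (σ i) ω) μ = Measure.map (fun ω (i : Fin n) => Z i ω) μ

/-- The `k`-th order statistic (the `k`-th smallest value, `1 ≤ k ≤ n`) of `w : Fin n → ℝ`,
viewed in the extended reals, with the convention that it equals `+∞` when `k - 1 ≥ n`. -/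
noncomputable def orderStatE {n : ℕ} (w : Fin n → ℝ) (k : ℕ) : EReal :=
  if h : k - 1 < n then ((w ∘ Tuple.sort w) ⟨k - 1, h⟩ : EReal) else ⊤


lemma card_filter_perm {n : ℕ} (σ : Equiv.Perm (Fin n)) (P : Fin n → Prop) [DecidablePred P] :
    (Finset.univ.filter fun i => P (σ i)).card = (Finset.univ.filter P).card := by
  apply Finset.card_bij (fun i _ => σ i)
  · intro a ha; simp only [mem_filter, mem_univ, true_and] at ha ⊢; exact ha
  · intro a _ b _ h; exact σ.injective h
  · intro b hb
    refine ⟨σ.symm b, ?_, by simp⟩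
    simp only [mem_filter, mem_univ, true_and] at hb ⊢
    simpa using hb

lemma card_filter_val_lt (n k : ℕ) :
    (Finset.univ.filter fun l : Fin n => (l : ℕ) < k).card = min k n := by
  rw [← Finset.card_range (min k n)]
  refine Finset.card_bij (fun l _ => (l : ℕ)) ?_ ?_ ?_
  · intro a ha; simp only [mem_filter, mem_univ, true_and] at ha
    simp only [mem_range]
    exact lt_min ha a.isLt
  · intro a _ b _ h; exact Fin.val_injective h
  · intro b hb
    simp only [mem_range, lt_min_iff] at hb
    exact ⟨⟨b, hb.2⟩, by simp [hb.1], rfl⟩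

lemma comb_lemma {n : ℕ} (e : Fin n → ℝ) (k : ℕ) :
    min k n ≤ (Finset.univ.filter fun j =>
      (Finset.univ.filter fun i => e i < e j).card < k).card := by
  classical
  set σ := Tuple.sort e with hσ
  have hmono : Monotone (fun i => e (σ i)) := Tuple.monotone_sort e
  have hsub : (Finset.univ.filter fun l : Fin n => (l : ℕ) < k).image σ ⊆
      Finset.univ.filter fun j => (Finset.univ.filter fun i => e i < e j).card < k := by
    intro j hj
    simp only [Finset.mem_image, mem_filter, mem_univ, true_and] at hj ⊢
    obtain ⟨l, hl, rfl⟩ := hj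
    have h1 : (Finset.univ.filter fun i => e i < e (σ l)).card
        = (Finset.univ.filter fun i => e (σ i) < e (σ l)).card :=
      (card_filter_perm σ _).symm
    rw [h1]
    have h2 : (Finset.univ.filter fun i => e (σ i) < e (σ l)) ⊆
        Finset.univ.filter fun i : Fin n => (i : ℕ) < (l : ℕ) := by
      intro i hi
      simp only [mem_filter, mem_univ, true_and] at hi ⊢
      by_contra h
      push_neg at h
      exact absurd (hmono (show l ≤ i from Fin.le_def.mpr h)) (not_le.mpr hi)
    calc (Finset.univ.filter fun i => e (σ i) < e (σ l)).card
        ≤ (Finset.univ.filter fun i : Fin n => (i : ℕ) < (l : ℕ)).card := Finset.card_le_card h2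
      _ = min (l : ℕ) n := card_filter_val_lt n l
      _ < k := lt_of_le_of_lt (min_le_left _ _) hl
  have := Finset.card_le_card hsub
  rwa [Finset.card_image_of_injective _ σ.injective, card_filter_val_lt] at this

lemma le_orderStatE_aux {n : ℕ} (w : Fin n → ℝ) (t : ℝ) (k : ℕ) (hk : 1 ≤ k) (h : k - 1 < n) :
    (t ≤ (w ∘ Tuple.sort w) ⟨k - 1, h⟩) ↔ (Finset.univ.filter fun i => w i < t).card < k := by
  classical
  set σ := Tuple.sort w with hσ
  have hmono : Monotone (fun i => w (σ i)) := Tuple.monotone_sort w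
  have hcard : (Finset.univ.filter fun i => w i < t).card
      = (Finset.univ.filter fun i => w (σ i) < t).card := (card_filter_perm σ _).symm
  rw [hcard]
  constructor
  · intro hle
    have hsub : (Finset.univ.filter fun i => w (σ i) < t) ⊆
        Finset.univ.filter fun i : Fin n => (i : ℕ) < k - 1 := by
      intro i hi
      simp only [mem_filter, mem_univ, true_and] at hi ⊢
      by_contra hc
      push_neg at hc
      have h2 := hmono (show (⟨k - 1, h⟩ : Fin n) ≤ i from hc)
      simp only at h2
      have h3 : t ≤ w (σ ⟨k - 1, h⟩) := hle
      linarith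
    have := Finset.card_le_card hsub
    rw [card_filter_val_lt] at this
    omega
  · intro hc
    by_contra hlt
    push_neg at hlt
    have hsub : (Finset.univ.filter fun l : Fin n => (l : ℕ) < k) ⊆
        Finset.univ.filter fun i => w (σ i) < t := by
      intro i hi
      simp only [mem_filter, mem_univ, true_and] at hi ⊢
      have hle : i ≤ (⟨k - 1, h⟩ : Fin n) := by
        rw [Fin.le_def]; simp; omega
      have h2 := hmono hle
      simp only at h2
      have h3 : w (σ ⟨k - 1, h⟩) < t := hlt
      linarith
    have := Finset.card_le_card hsub
    rw [card_filter_val_lt] at this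
    omega


lemma key_iff' {n : ℕ} (w : Fin n → ℝ) (q y : ℝ) (k : ℕ) (hk : 1 ≤ k) :
    ((q : EReal) - orderStatE w k ≤ (y : EReal)) ↔
      (Finset.univ.filter fun i => w i < q - y).card < k := by
  unfold orderStatE
  split_ifs with h
  · rw [show ((w ∘ Tuple.sort w) ⟨k - 1, h⟩ : EReal) = (((w ∘ Tuple.sort w) ⟨k - 1, h⟩ : ℝ) : EReal) from rfl,
      ← EReal.coe_sub, EReal.coe_le_coe_iff, ← le_orderStatE_aux w (q - y) k hk h]
    constructor <;> intro <;> linarith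
  · simp only [not_lt] at h
    have h1 : (q : EReal) - ⊤ ≤ (y : EReal) := by
      rw [EReal.sub_top]
      exact bot_le
    have h2 : (Finset.univ.filter fun i => w i < q - y).card < k := by
      calc (Finset.univ.filter fun i : Fin n => w i < q - y).card
          ≤ (Finset.univ : Finset (Fin n)).card := Finset.card_le_card (Finset.filter_subset _ _)
        _ = n := by simp
        _ < k := by omega
    simp [h1, h2]

/-- Lower-tail coverage guarantee of Theorem 2 (asymmetric conformalization), conditional on
the proper training set: if the pairs `(X i, Y i)`, `i = 1, …, m+1`, are exchangeable, the
lower-tail conformity scores are `E_lo i = q_lo (X i) - Y i`, and `Q_{1-α_lo}` is the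
`⌈(1-α_lo)(m+1)⌉`-th smallest value among `E_lo 1, …, E_lo m` (equal to `+∞` when the rank
exceeds `m`), then `P(Y (m+1) ≥ q_lo (X (m+1)) - Q_{1-α_lo}) ≥ 1 - α_lo`. -/
theorem cqr_asymmetric_lower_tail {Ω : Type*} [MeasurableSpace Ω]
    (μ : Measure Ω) [IsProbabilityMeasure μ] {m p : ℕ}
    (qlo : (Fin p → ℝ) → ℝ) (hqlo : Measurable qlo)
    (X : Fin (m + 1) → Ω → (Fin p → ℝ)) (Y : Fin (m + 1) → Ω → ℝ)
    (hmeas : ∀ i, Measurable fun ω => (X i ω, Y i ω))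
    (hexch : Exchangeable μ fun i ω => (X i ω, Y i ω))
    (αlo : ℝ) (hαlo : αlo ∈ Set.Ioo (0 : ℝ) 1)
    (Elo : Fin (m + 1) → Ω → ℝ) (hElo : Elo = fun i ω => qlo (X i ω) - Y i ω)
    (Q : Ω → EReal)
    (hQ : Q = fun ω =>
      orderStatE (fun i : Fin m => Elo i.castSucc ω) ⌈(1 - αlo) * ((m : ℝ) + 1)⌉₊) :
    ENNReal.ofReal (1 - αlo) ≤
      μ {ω | (qlo (X (Fin.last m) ω) : EReal) - Q ω ≤ (Y (Fin.last m) ω : EReal)} := by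
  classical
  obtain ⟨hα0, hα1⟩ := hαlo
  set k := ⌈(1 - αlo) * ((m : ℝ) + 1)⌉₊ with hkdef
  have hk1 : 1 ≤ k := by
    rw [hkdef]
    exact Nat.one_le_iff_ne_zero.mpr (Nat.pos_iff_ne_zero.mp
      (Nat.ceil_pos.mpr (mul_pos (by linarith) (by positivity))))
  set g : (Fin p → ℝ) × ℝ → ℝ := fun z => qlo z.1 - z.2 with hgdef
  have hgm : Measurable g := (hqlo.comp measurable_fst).sub measurable_snd
  set Z : Ω → Fin (m + 1) → (Fin p → ℝ) × ℝ := fun ω i => (X i ω, Y i ω) with hZdef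
  have hZm : Measurable Z := measurable_pi_lambda _ hmeas
  set B : Fin (m + 1) → Set (Fin (m + 1) → (Fin p → ℝ) × ℝ) := fun j =>
    {v | (Finset.univ.filter fun i => g (v i) < g (v j)).card < k} with hBdef
  have hBm : ∀ j, MeasurableSet (B j) := by
    intro j
    have hF : Measurable fun v : Fin (m + 1) → (Fin p → ℝ) × ℝ =>
        (Finset.univ.filter fun i => g (v i) < g (v j)).card := by
      simp_rw [Finset.card_filter]
      apply Finset.measurable_sum
      intro i _
      exact Measurable.ite
        (measurableSet_lt (hgm.comp (measurable_pi_apply i)) (hgm.comp (measurable_pi_apply j)))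
        measurable_const measurable_const
    exact hF (show MeasurableSet {c : ℕ | c < k} from trivial)
  set A : Fin (m + 1) → Set Ω := fun j => Z ⁻¹' B j with hAdef
  have hAm : ∀ j, MeasurableSet (A j) := fun j => hZm (hBm j)
  -- all A j have the same measure
  have hAeq : ∀ j, μ (A j) = μ (A (Fin.last m)) := by
    intro j
    set σ : Equiv.Perm (Fin (m + 1)) := Equiv.swap j (Fin.last m) with hσdef
    have hσj : σ (Fin.last m) = j := Equiv.swap_apply_right j (Fin.last m)
    have hml : Measurable fun ω (i : Fin (m + 1)) => (X (σ i) ω, Y (σ i) ω) :=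
      measurable_pi_lambda _ fun i => hmeas (σ i)
    have hpre : (fun ω (i : Fin (m + 1)) => (X (σ i) ω, Y (σ i) ω)) ⁻¹' B (Fin.last m) = A j := by
      ext ω
      simp only [hAdef, hBdef, Set.mem_preimage, Set.mem_setOf_eq, hZdef]
      simp only [hσj]
      exact iff_of_eq (congrArg (fun c => c < k)
        (card_filter_perm σ (fun i => g (X i ω, Y i ω) < g (X j ω, Y j ω))))
    have hexσ := hexch σ
    calc μ (A j) = μ ((fun ω (i : Fin (m + 1)) => (X (σ i) ω, Y (σ i) ω)) ⁻¹' B (Fin.last m)) := by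
          rw [hpre]
      _ = Measure.map (fun ω (i : Fin (m + 1)) => (X (σ i) ω, Y (σ i) ω)) μ (B (Fin.last m)) :=
          (Measure.map_apply hml (hBm _)).symm
      _ = Measure.map (fun ω (i : Fin (m + 1)) => (X i ω, Y i ω)) μ (B (Fin.last m)) := by
          rw [hexσ]
      _ = μ (A (Fin.last m)) := by
          rw [Measure.map_apply (measurable_pi_lambda _ hmeas) (hBm _)]
  -- pointwise counting bound
  have hpoint : ∀ ω, ((min k (m + 1) : ℕ) : ℝ≥0∞)
      ≤ ∑ j : Fin (m + 1), (A j).indicator (1 : Ω → ℝ≥0∞) ω := by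
    intro ω
    have hind : ∑ j : Fin (m + 1), (A j).indicator (1 : Ω → ℝ≥0∞) ω
        = ((Finset.univ.filter fun j => ω ∈ A j).card : ℝ≥0∞) := by
      rw [Finset.card_filter]
      push_cast
      refine Finset.sum_congr rfl fun j _ => ?_
      by_cases h : ω ∈ A j <;> simp [Set.indicator, h]
    rw [hind]
    have hcomb := comb_lemma (fun i => g (Z ω i)) k
    have hmem : (Finset.univ.filter fun j => ω ∈ A j)
        = Finset.univ.filter fun j =>
            (Finset.univ.filter fun i => g (Z ω i) < g (Z ω j)).card < k := by
      apply Finset.filter_congr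
      intro j _
      exact Iff.rfl
    rw [hmem]
    exact_mod_cast Nat.cast_le.mpr hcomb
  -- integrate
  have hsum : ((min k (m + 1) : ℕ) : ℝ≥0∞) ≤ ∑ j : Fin (m + 1), μ (A j) := by
    calc ((min k (m + 1) : ℕ) : ℝ≥0∞)
        = ∫⁻ _, ((min k (m + 1) : ℕ) : ℝ≥0∞) ∂μ := by simp
      _ ≤ ∫⁻ ω, ∑ j : Fin (m + 1), (A j).indicator (1 : Ω → ℝ≥0∞) ω ∂μ := lintegral_mono hpoint
      _ = ∑ j : Fin (m + 1), ∫⁻ ω, (A j).indicator (1 : Ω → ℝ≥0∞) ω ∂μ :=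
          lintegral_finset_sum _ fun j _ => measurable_one.indicator (hAm j)
      _ = ∑ j : Fin (m + 1), μ (A j) := by
          refine Finset.sum_congr rfl fun j _ => ?_
          exact lintegral_indicator_one (hAm j)
  have hsum' : ∑ j : Fin (m + 1), μ (A j) = ((m + 1 : ℕ) : ℝ≥0∞) * μ (A (Fin.last m)) := by
    rw [Finset.sum_congr rfl fun j _ => hAeq j, Finset.sum_const, Finset.card_univ,
      Fintype.card_fin, nsmul_eq_mul]
  have hkey : ((min k (m + 1) : ℕ) : ℝ≥0∞) ≤ ((m + 1 : ℕ) : ℝ≥0∞) * μ (A (Fin.last m)) :=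
    hsum' ▸ hsum
  -- arithmetic
  have hr : (1 - αlo) * ((m : ℝ) + 1) ≤ ((min k (m + 1) : ℕ) : ℝ) := by
    push_cast
    rw [le_min_iff]
    constructor
    · exact Nat.le_ceil _
    · nlinarith [Nat.cast_nonneg (α := ℝ) m]
  have h1 : ENNReal.ofReal (1 - αlo) * ((m + 1 : ℕ) : ℝ≥0∞) ≤ ((min k (m + 1) : ℕ) : ℝ≥0∞) := by
    rw [← ENNReal.ofReal_natCast (m + 1), ← ENNReal.ofReal_natCast (min k (m + 1)),
      ← ENNReal.ofReal_mul (by linarith)]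
    exact ENNReal.ofReal_le_ofReal (by push_cast at hr ⊢; linarith)
  have hfin : ENNReal.ofReal (1 - αlo) ≤ μ (A (Fin.last m)) := by
    have h2 : ENNReal.ofReal (1 - αlo) * ((m + 1 : ℕ) : ℝ≥0∞)
        ≤ μ (A (Fin.last m)) * ((m + 1 : ℕ) : ℝ≥0∞) := by
      rw [mul_comm (μ (A (Fin.last m)))]
      exact le_trans h1 hkey
    exact (ENNReal.mul_le_mul_iff_left (Nat.cast_ne_zero.mpr (Nat.succ_ne_zero m))
      (ENNReal.natCast_ne_top _)).mp h2
  -- the event equals A (Fin.last m)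
  have hset : {ω | (qlo (X (Fin.last m) ω) : EReal) - Q ω ≤ (Y (Fin.last m) ω : EReal)}
      = A (Fin.last m) := by
    ext ω
    simp only [Set.mem_setOf_eq, hAdef, hBdef, Set.mem_preimage, Set.mem_setOf_eq, hZdef]
    rw [hQ]
    rw [key_iff' (fun i : Fin m => Elo i.castSucc ω) (qlo (X (Fin.last m) ω))
      (Y (Fin.last m) ω) k hk1]
    have hbridge : (Finset.univ.filter fun i : Fin (m + 1) =>
          g (X i ω, Y i ω) < g (X (Fin.last m) ω, Y (Fin.last m) ω)).card
        = (Finset.univ.filter fun i : Fin m =>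
          Elo i.castSucc ω < qlo (X (Fin.last m) ω) - Y (Fin.last m) ω).card := by
      rw [Finset.card_filter, Finset.card_filter, Fin.sum_univ_castSucc]
      simp only [hElo, hgdef, lt_irrefl, if_false, add_zero]
    rw [hbridge]
  rw [hset]
  exact hfin
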